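/- arXiv:0909.0347 — 2 statements merged into one kernel-verified Lean document; each statement's English description precedes it below -/
import Mathlib

section
/- Let G = (N, X, π) be a finite strategic game that has the LIP for a function φ : X → ℝ≥0^q, and suppose the coordinates of φ attain at least two distinct values. Set φ_max := max_{x∈X, 1≤i≤q} φ_i(x) and let ε_min > 0 be the minimum positive difference between any two distinct values attained by coordinates of φ. Then for every real M > log(q)·φ_max / ε_min, the function P_M(x) = Σ_{i=1}^q φ_i(x)^M is a generalized strong ordinal potential for G, i.e., P_M(x) − P_M(y) > 0 for every improving move (x,y). -/
open Finset

/-- The vector `a` sorted in non-increasing order. -/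
noncomputable def sortDesc {α : Type*} [LinearOrder α] {q : ℕ} (a : Fin q → α) : Fin q → α :=
  fun i => a (Tuple.sort a i.rev)

/-- `a` is strictly sorted-lexicographically smaller than `b`. -/
def SLexLt {α : Type*} [LinearOrder α] {q : ℕ} (a b : Fin q → α) : Prop :=
  ∃ m : Fin q, (∀ i, i < m → sortDesc a i = sortDesc b i) ∧ sortDesc a m < sortDesc b m

/-- Sorted-lexicographic comparison of vectors indexed by an arbitrary finite type. -/
def SLexLtOn {α : Type*} [LinearOrder α] {ι : Type*} [Fintype ι] (a b : ι → α) : Prop :=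
  SLexLt (a ∘ (Fintype.equivFin ι).symm) (b ∘ (Fintype.equivFin ι).symm)

/-- An improving move: some nonempty coalition `S` deviates (players outside `S`
keep their strategies) and every member of `S` strictly decreases her cost. -/
def ImprovingMove {ι : Type*} {X : ι → Type*} {β : Type*} [Preorder β]
    (π : (∀ i, X i) → ι → β) (x y : ∀ i, X i) : Prop :=
  ∃ S : Finset ι, S.Nonempty ∧ (∀ i ∉ S, y i = x i) ∧ ∀ i ∈ S, π y i < π x i

/-- Key scalar inequality: if `0 ≤ a`, `ε ≤ b - a`, `b ≤ φm` and
`M > log q * φm / ε`, then `q * a ^ M < b ^ M`. -/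
lemma key_ineq {q : ℕ} (hq : 1 ≤ q) {a b ε φm M : ℝ} (ha : 0 ≤ a) (hε : 0 < ε)
    (hab : ε ≤ b - a) (hbφ : b ≤ φm) (hM : Real.log q * φm / ε < M) :
    (q : ℝ) * a ^ M < b ^ M := by
  have hb : 0 < b := by linarith
  have hφm : 0 < φm := lt_of_lt_of_le hb hbφ
  have hlogq : 0 ≤ Real.log q := Real.log_nonneg (by exact_mod_cast hq)
  have hM0 : 0 < M :=
    lt_of_le_of_lt (div_nonneg (mul_nonneg hlogq hφm.le) hε.le) hM
  rcases eq_or_lt_of_le ha with h0 | hapos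
  · rw [← h0, Real.zero_rpow hM0.ne', mul_zero]
    exact Real.rpow_pos_of_pos hb M
  · have hab' : a < b := by linarith
    have hkey : Real.log q < M * (Real.log b - Real.log a) := by
      rcases eq_or_lt_of_le hlogq with hq0 | hqpos
      · rw [← hq0]
        exact mul_pos hM0 (sub_pos.mpr (Real.log_lt_log hapos hab'))
      · -- log b - log a ≥ (b-a)/b ≥ ε/φm
        have h1 : Real.log a - Real.log b ≤ a / b - 1 := by
          have h := Real.log_le_sub_one_of_pos (div_pos hapos hb)
          rwa [Real.log_div hapos.ne' hb.ne'] at h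
        have h2 : ε / φm ≤ (b - a) / b := by
          gcongr
        have h3 : (b - a) / b = 1 - a / b := by field_simp
        have h4 : ε / φm ≤ Real.log b - Real.log a := by linarith
        have h5 : Real.log q < M * (ε / φm) := by
          have h6 : Real.log q * φm < M * ε := (div_lt_iff₀ hε).mp hM
          rw [show M * (ε / φm) = M * ε / φm by ring, lt_div_iff₀ hφm]
          linarith
        calc Real.log q < M * (ε / φm) := h5
          _ ≤ M * (Real.log b - Real.log a) :=
            mul_le_mul_of_nonneg_left h4 hM0.le
    have hqpos : (0 : ℝ) < q := by exact_mod_cast hq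
    have hL : 0 < (q : ℝ) * a ^ M := mul_pos hqpos (Real.rpow_pos_of_pos hapos M)
    have hR : 0 < b ^ M := Real.rpow_pos_of_pos hb M
    rw [← Real.log_lt_log_iff hL hR, Real.log_mul hqpos.ne' (Real.rpow_pos_of_pos hapos M).ne',
      Real.log_rpow hapos, Real.log_rpow hb]
    linarith

lemma sortDesc_sum {q : ℕ} (f : Fin q → ℝ) (M : ℝ) :
    ∑ j : Fin q, sortDesc f j ^ M = ∑ j : Fin q, f j ^ M :=
  Equiv.sum_comp (Fin.revPerm.trans (Tuple.sort f)) (fun j => f j ^ M)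

lemma sortDesc_antitone {q : ℕ} (f : Fin q → ℝ) : Antitone (sortDesc f) := by
  intro i j hij
  exact Tuple.monotone_sort f (Fin.rev_le_rev.mpr hij)

/-- If a finite strategic game has the LIP for `φ : X → ℝ≥0^q`
whose coordinates attain at least two distinct values, `φ_max` is the maximum
value of a coordinate of `φ`, and `ε_min` is the least positive difference
between two values attained by coordinates of `φ`, then for every real
`M > log q · φ_max / ε_min` the function `P_M x = ∑ i, (φ x i)^M` is a
generalized strong ordinal potential. -/
theorem stmt_4 {ι : Type*} [Fintype ι] [Nonempty ι] {X : ι → Type*}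
    [∀ i, Fintype (X i)] [∀ i, Nonempty (X i)]
    (π : (∀ i, X i) → ι → ℝ) (hπ : ∀ x i, 0 ≤ π x i)
    (q : ℕ) (φ : (∀ i, X i) → Fin q → ℝ) (hφ : ∀ x j, 0 ≤ φ x j)
    (hlip : ∀ x y, ImprovingMove π x y → SLexLt (φ y) (φ x))
    (htwo : ∃ x y j k, φ x j ≠ φ y k)
    (φmax : ℝ) (hφmax : IsGreatest {v : ℝ | ∃ x j, φ x j = v} φmax)
    (εmin : ℝ) (hεmin : IsLeast {d : ℝ | 0 < d ∧ ∃ x y j k, φ x j - φ y k = d} εmin)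
    (M : ℝ) (hM : Real.log q * φmax / εmin < M) :
    ∀ x y, ImprovingMove π x y →
      ∑ j : Fin q, (φ y j) ^ M < ∑ j : Fin q, (φ x j) ^ M := by
  intro x y hmove
  obtain ⟨m, hpre, hm⟩ := hlip x y hmove
  have hq : 1 ≤ q := Nat.pos_of_ne_zero (by rintro rfl; exact m.elim0)
  set a : Fin q → ℝ := sortDesc (φ y) with ha
  set b : Fin q → ℝ := sortDesc (φ x) with hb
  have ha0 : ∀ j, 0 ≤ a j := fun j => hφ y _
  have hb0 : ∀ j, 0 ≤ b j := fun j => hφ x _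
  -- εmin ≤ b m - a m
  have hεpos : 0 < εmin := hεmin.1.1
  have hεle : εmin ≤ b m - a m :=
    hεmin.2 ⟨sub_pos.mpr hm, x, y, _, _, rfl⟩
  have hbφ : b m ≤ φmax := hφmax.2 ⟨x, _, rfl⟩
  have hφmax0 : 0 ≤ φmax := le_trans (hφ x _) hbφ
  have hlogq : 0 ≤ Real.log q := Real.log_nonneg (by exact_mod_cast hq)
  have hM0 : 0 < M :=
    lt_of_le_of_lt (div_nonneg (mul_nonneg hlogq hφmax0) hεpos.le) hM
  have hkey : (q : ℝ) * a m ^ M < b m ^ M :=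
    key_ineq hq (ha0 m) hεpos hεle hbφ hM
  rw [← sortDesc_sum (φ y) M, ← sortDesc_sum (φ x) M, ← ha, ← hb]
  rw [← Finset.sum_filter_add_sum_filter_not univ (· < m) (fun j => a j ^ M),
    ← Finset.sum_filter_add_sum_filter_not univ (· < m) (fun j => b j ^ M)]
  have heq : ∑ j ∈ univ.filter (· < m), a j ^ M = ∑ j ∈ univ.filter (· < m), b j ^ M :=
    Finset.sum_congr rfl fun j hj => by
      rw [hpre j (Finset.mem_filter.mp hj).2]
  have hTa : ∑ j ∈ univ.filter (fun j => ¬ j < m), a j ^ M ≤ (q : ℝ) * a m ^ M := by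
    calc ∑ j ∈ univ.filter (fun j => ¬ j < m), a j ^ M
        ≤ (univ.filter (fun j => ¬ j < m)).card • (a m ^ M) := by
          apply Finset.sum_le_card_nsmul
          intro j hj
          have hmj : m ≤ j := le_of_not_gt (Finset.mem_filter.mp hj).2
          exact Real.rpow_le_rpow (ha0 j) (sortDesc_antitone (φ y) hmj) hM0.le
      _ = ((univ.filter (fun j => ¬ j < m)).card : ℝ) * a m ^ M := by
          rw [nsmul_eq_mul]
      _ ≤ (q : ℝ) * a m ^ M := by
          apply mul_le_mul_of_nonneg_right _ (Real.rpow_nonneg (ha0 m) M)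
          exact_mod_cast (Finset.card_filter_le univ _).trans_eq (by simp)
  have hTb : b m ^ M ≤ ∑ j ∈ univ.filter (fun j => ¬ j < m), b j ^ M :=
    Finset.single_le_sum (fun j _ => Real.rpow_nonneg (hb0 j) M)
      (Finset.mem_filter.mpr ⟨Finset.mem_univ m, lt_irrefl m⟩)
  linarith
end

section
/- Let G = (N, Δ, π) be an infinite bottleneck congestion game in which every cost function c_f is bounded, i.e., there is a constant bounding c_f(ℓ_f(ξ)) over all ξ ∈ Δ and f ∈ F. Then for every α > 0, G possesses an α-approximate strong Nash equilibrium: a profile ξ ∈ Δ such that there is no nonempty coalition S ⊆ N and ν_S with π_i(ξ) − π_i(ν_S, ξ_{−S}) > α for all i ∈ S. -/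
open Finset

open scoped NNReal

/-- The load of facility `f` under a splittable strategy profile `ξ`:
the sum of all intensities put on pure strategies containing `f`. -/
noncomputable def facLoad {ι F : Type*} [Fintype ι] [Fintype F] [DecidableEq F] {ni : ι → ℕ}
    (strat : ∀ i, Fin (ni i) → Finset F) (ξ : ∀ i, Fin (ni i) → ℝ≥0) (f : F) : ℝ≥0 :=
  ∑ i, ∑ j ∈ Finset.univ.filter (fun j => f ∈ strat i j), ξ i j

/-- The set `F_i(ξ)` of facilities used by player `i` under profile `ξ`. -/
noncomputable def usedFac {ι F : Type*} [Fintype F] [DecidableEq F] {ni : ι → ℕ}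
    (strat : ∀ i, Fin (ni i) → Finset F) (ξ : ∀ i, Fin (ni i) → ℝ≥0) (i : ι) : Finset F :=
  Finset.univ.filter (fun f => ∃ j, f ∈ strat i j ∧ 0 < ξ i j)

/-- The private (bottleneck) cost `π_i(ξ) = max_{f ∈ F_i(ξ)} c_f(ℓ_f(ξ))` of
player `i` in an infinite bottleneck congestion game. -/
noncomputable def btlCost {ι F : Type*} [Fintype ι] [Fintype F] [DecidableEq F] {ni : ι → ℕ}
    (c : F → ℝ≥0 → ℝ≥0) (strat : ∀ i, Fin (ni i) → Finset F)
    (ξ : ∀ i, Fin (ni i) → ℝ≥0) (i : ι) : ℝ≥0 :=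
  (usedFac strat ξ i).sup (fun f => c f (facLoad strat ξ f))

/-!
Round every private cost up to a multiple of `α`, giving the level `⌈π_i / α⌉`, and weigh
level `L` by `B ^ L` with `B = n + 1`, `n` the number of players. Let `Q` be the highest old level in an `α`-improving
coalition `S`. Every member of `S` ends strictly below `Q`. An outsider keeps its strategy, so
its cost can only grow on facilities whose load grew; such a facility is used by a member of
`S` after the move, so the outsider's new cost is at most that member's, and its level either
does not grow or ends below `Q` as well. Hence the potential `∑ B ^ level` loses at least
`B ^ Q` and gains at most `n * B ^ (Q - 1) < B ^ Q`. A feasible profile minimising this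
`ℕ`-valued potential therefore admits no `α`-improving move.
-/

theorem ceil_div_lt_ceil_div_of_add_le {K : Type*} [Semifield K] [LinearOrder K]
    [IsStrictOrderedRing K] [FloorSemiring K] {α v M : K} (hα : 0 < α) (hv : 0 ≤ v)
    (h : v + α ≤ M) : ⌈v / α⌉₊ < ⌈M / α⌉₊ := by
  have hstep : v / α + 1 ≤ M / α := by
    rwa [← div_self hα.ne', ← add_div, div_le_div_iff_of_pos_right hα]
  calc ⌈v / α⌉₊ < ⌈v / α⌉₊ + 1 := Nat.lt_succ_self _
    _ = ⌈v / α + 1⌉₊ := (Nat.ceil_add_one (div_nonneg hv hα.le)).symm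
    _ ≤ ⌈M / α⌉₊ := Nat.ceil_mono hstep

theorem sum_pow_lt_sum_pow {ι : Type*} [Fintype ι] {B : ℕ} (hB : Fintype.card ι < B)
    {a b : ι → ℕ} {S : Finset ι} {i₀ : ι} (hi₀ : i₀ ∈ S) (hS : ∀ i ∈ S, b i < a i₀)
    (hSc : ∀ i ∉ S, b i ≤ a i ∨ b i < a i₀) :
    ∑ i, B ^ b i < ∑ i, B ^ a i := by
  classical
  obtain ⟨Q, hQ⟩ : ∃ Q, a i₀ = Q + 1 := Nat.exists_eq_add_one.mpr (Nat.zero_lt_of_lt (hS i₀ hi₀))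
  have hB1 : 1 ≤ B := Nat.one_le_of_lt hB
  have hbelow : ∀ i, b i < a i₀ → B ^ b i ≤ B ^ Q := fun i h =>
    Nat.pow_le_pow_right hB1 (by omega)
  have hterm : ∀ i, B ^ b i ≤ (if i ∈ Sᶜ then B ^ a i else 0) + B ^ Q := by
    intro i
    by_cases hi : i ∈ S
    · simpa [hi] using hbelow i (hS i hi)
    · rw [if_pos (Finset.mem_compl.mpr hi)]
      rcases hSc i hi with h | h
      · exact le_add_right (Nat.pow_le_pow_right hB1 h)
      · exact le_add_left (hbelow i h)
  have hsum_ite : ∑ i, (if i ∈ Sᶜ then B ^ a i else 0) = ∑ i ∈ Sᶜ, B ^ a i := by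
    rw [Finset.sum_ite_mem, Finset.univ_inter]
  calc ∑ i, B ^ b i
      ≤ ∑ i ∈ Sᶜ, B ^ a i + Fintype.card ι * B ^ Q := by
        refine (Finset.sum_le_sum fun i _ => hterm i).trans_eq ?_
        rw [Finset.sum_add_distrib, hsum_ite, Finset.sum_const, smul_eq_mul, Finset.card_univ]
    _ < ∑ i ∈ Sᶜ, B ^ a i + B ^ a i₀ := by
        rw [hQ, pow_succ']
        exact Nat.add_lt_add_left (Nat.mul_lt_mul_of_pos_right hB (by positivity)) _
    _ ≤ ∑ i ∈ Sᶜ, B ^ a i + ∑ i ∈ S, B ^ a i :=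
        Nat.add_le_add_left (Finset.single_le_sum (f := fun i => B ^ a i)
          (fun _ _ => Nat.zero_le _) hi₀) _
    _ = ∑ i, B ^ a i := Finset.sum_compl_add_sum S _

theorem exists_forall_sum_eq {ι M : Type*} [AddCommMonoid M] {ni : ι → ℕ}
    (hni : ∀ i, 0 < ni i) (d : ι → M) : ∃ ξ : ∀ i, Fin (ni i) → M, ∀ i, ∑ j, ξ i j = d i :=
  ⟨fun i => Pi.single ⟨0, hni i⟩ (d i), fun i => by simp⟩

section BottleneckGame

variable {ι F : Type*} [Fintype ι] [Fintype F] [DecidableEq F] {ni : ι → ℕ}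
  {c : F → ℝ≥0 → ℝ≥0} {strat : ∀ i, Fin (ni i) → Finset F}
  {ξ ν : ∀ i, Fin (ni i) → ℝ≥0} {S : Finset ι}

theorem le_btlCost {i : ι} {f : F} (hf : f ∈ usedFac strat ξ i) :
    c f (facLoad strat ξ f) ≤ btlCost c strat ξ i :=
  Finset.le_sup (f := fun f => c f (facLoad strat ξ f)) hf

theorem exists_mem_usedFac_of_facLoad_lt (hout : ∀ i ∉ S, ν i = ξ i) {f : F}
    (hf : facLoad strat ξ f < facLoad strat ν f) : ∃ i ∈ S, f ∈ usedFac strat ν i := by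
  by_contra! hunused
  refine hf.not_ge (Finset.sum_le_sum fun i _ => ?_)
  by_cases hi : i ∈ S
  · refine (Finset.sum_eq_zero fun j hj => ?_).trans_le zero_le
    by_contra hpos
    exact hunused i hi (by
      simp only [usedFac, Finset.mem_filter, Finset.mem_univ, true_and]
      exact ⟨j, (Finset.mem_filter.mp hj).2, pos_of_ne_zero hpos⟩)
  · rw [hout i hi]

theorem btlCost_le_sup_of_notMem (hc : ∀ f, Monotone (c f)) (hout : ∀ i ∉ S, ν i = ξ i)
    {k : ι} (hk : k ∉ S) :
    btlCost c strat ν k ≤ btlCost c strat ξ k ⊔ S.sup (btlCost c strat ν) := by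
  have hused : usedFac strat ν k = usedFac strat ξ k := by simp [usedFac, hout k hk]
  refine Finset.sup_le fun f hf => ?_
  rcases le_or_gt (facLoad strat ν f) (facLoad strat ξ f) with hle | hlt
  · exact le_sup_of_le_left ((hc f hle).trans (le_btlCost (hused ▸ hf)))
  · obtain ⟨i, hi, hfi⟩ := exists_mem_usedFac_of_facLoad_lt hout hlt
    exact le_sup_of_le_right ((le_btlCost hfi).trans (Finset.le_sup hi))

variable (c strat) in
noncomputable def levelPotential (α : ℝ≥0) (B : ℕ) (ρ : ∀ i, Fin (ni i) → ℝ≥0) : ℕ :=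
  ∑ i, B ^ ⌈btlCost c strat ρ i / α⌉₊

theorem levelPotential_lt_of_improving (hc : ∀ f, Monotone (c f)) {α : ℝ≥0} (hα : 0 < α)
    {B : ℕ} (hB : Fintype.card ι < B) (hS : S.Nonempty) (hout : ∀ i ∉ S, ν i = ξ i)
    (himp : ∀ i ∈ S, btlCost c strat ν i + α < btlCost c strat ξ i) :
    levelPotential c strat α B ν < levelPotential c strat α B ξ := by
  obtain ⟨i₀, hi₀, hmax⟩ := S.exists_max_image (btlCost c strat ξ) hS
  obtain ⟨i₁, hi₁, hsup⟩ := S.exists_mem_eq_sup hS (btlCost c strat ν)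
  have hdev : ∀ i ∈ S, btlCost c strat ν i + α ≤ btlCost c strat ξ i₀ :=
    fun i hi => (himp i hi).le.trans (hmax i hi)
  refine sum_pow_lt_sum_pow hB hi₀
    (fun i hi => ceil_div_lt_ceil_div_of_add_le hα zero_le (hdev i hi)) fun k hk => ?_
  rcases le_sup_iff.mp (btlCost_le_sup_of_notMem hc hout hk) with h | h
  · exact Or.inl (Nat.ceil_mono (div_le_div_of_nonneg_right h hα.le))
  · refine Or.inr (ceil_div_lt_ceil_div_of_add_le hα zero_le ?_)
    exact (add_le_add (h.trans_eq hsup) le_rfl).trans (hdev i₁ hi₁)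

end BottleneckGame

theorem stmt_19_general {ι F : Type*} [Fintype ι] [Fintype F]
    [DecidableEq F] {ni : ι → ℕ} (hni : ∀ i, 0 < ni i)
    (strat : ∀ i, Fin (ni i) → Finset F)
    (d : ι → ℝ≥0)
    (c : F → ℝ≥0 → ℝ≥0) (hc : ∀ f, Monotone (c f))
    (α : ℝ≥0) (hα : 0 < α) :
    ∃ ξ : ∀ i, Fin (ni i) → ℝ≥0, (∀ i, ∑ j, ξ i j = d i) ∧
      ¬ ∃ (ν : ∀ i, Fin (ni i) → ℝ≥0) (S : Finset ι), (∀ i, ∑ j, ν i j = d i) ∧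
        S.Nonempty ∧ (∀ i ∉ S, ν i = ξ i) ∧
        ∀ i ∈ S, btlCost c strat ν i + α < btlCost c strat ξ i := by
  set feasible := {ρ : ∀ i, Fin (ni i) → ℝ≥0 | ∀ i, ∑ j, ρ i j = d i}
  set P := levelPotential c strat α (Fintype.card ι + 1)
  obtain ⟨ξ₀, hξ₀⟩ := exists_forall_sum_eq hni d
  refine ⟨Function.argminOn P feasible ⟨ξ₀, hξ₀⟩, Function.argminOn_mem P feasible _, ?_⟩
  rintro ⟨ν, S, hν, hS, hout, himp⟩
  exact Function.not_lt_argminOn P feasible hν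
    (levelPotential_lt_of_improving hc hα (Nat.lt_succ_self _) hS hout himp)

/-- Every infinite bottleneck congestion game with bounded
facility cost functions possesses an α-approximate strong Nash equilibrium for
every `α > 0`: a feasible profile from which no nonempty coalition can deviate
so that every member decreases her cost by more than `α`. -/
theorem stmt_19 {ι F : Type*} [Fintype ι] [Nonempty ι] [Fintype F] [Nonempty F]
    [DecidableEq F] {ni : ι → ℕ} (hni : ∀ i, 0 < ni i)
    (strat : ∀ i, Fin (ni i) → Finset F) (hstrat : ∀ i j, (strat i j).Nonempty)
    (d : ι → ℝ≥0) (hd : ∀ i, 0 < d i)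
    (c : F → ℝ≥0 → ℝ≥0) (hc : ∀ f, Monotone (c f))
    (hbd : ∃ C : ℝ≥0, ∀ (f : F) (ξ : ∀ i, Fin (ni i) → ℝ≥0),
      (∀ i, ∑ j, ξ i j = d i) → c f (facLoad strat ξ f) ≤ C)
    (α : ℝ≥0) (hα : 0 < α) :
    ∃ ξ : ∀ i, Fin (ni i) → ℝ≥0, (∀ i, ∑ j, ξ i j = d i) ∧
      ¬ ∃ (ν : ∀ i, Fin (ni i) → ℝ≥0) (S : Finset ι), (∀ i, ∑ j, ν i j = d i) ∧
        S.Nonempty ∧ (∀ i ∉ S, ν i = ξ i) ∧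
        ∀ i ∈ S, btlCost c strat ν i + α < btlCost c strat ξ i :=
  stmt_19_general hni strat d c hc α hα
end
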